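/- Let 0 < α < 1 and λ > 0. For every t > 0, the function t ↦ t^{α−1} E_{α,α}(−λ t^α) is differentiable at t with derivative (d/dt)( t^{α−1} E_{α,α}(−λ t^α) ) = t^{α−2} E_{α,α−1}(−λ t^α). -/

import Mathlib

open Real Set

/-- Two-parameter Mittag-Leffler function of a real argument; terms at poles of Γ
are interpreted as 0 (in Lean, division by Γ = 0 gives 0). -/
noncomputable def mittagLeffler (α σ x : ℝ) : ℝ :=
  ∑' k : ℕ, x ^ k / Real.Gamma (α * (k : ℝ) + σ)

/-!
By log-convexity of `Γ`, `Γ (x + a) ≥ (x - 1) ^ a * Γ x`, so the coefficients `1 / Γ (α k + σ)`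
of `E_{α,σ}` decay faster than any geometric sequence and `E_{α,σ}` can be differentiated
termwise on all of `ℝ`. Coefficientwise, `Γ (y + 1) = y Γ y` gives the recurrence
`E_{α,σ-1}(x) = (σ - 1) E_{α,σ}(x) + α x E'_{α,σ}(x)`; for `σ = α` and `x = -λ t ^ α` its right-hand
side is, up to the factor `t ^ (α - 2)`, what the product and chain rules produce.
-/

open Filter Topology

namespace Real

theorem rpow_mul_Gamma_le_Gamma_add {x a : ℝ} (hx : 1 < x) (ha : 0 < a) :
    (x - 1) ^ a * Gamma x ≤ Gamma (x + a) := by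
  have hx₁ : 0 < x - 1 := by linarith
  have hslope := convexOn_log_Gamma.slope_mono_adjacent (x := x - 1) (y := x) (z := x + a)
    hx₁ (by simp only [mem_Ioi]; linarith) (by linarith) (by linarith)
  have hlog : log (Gamma x) = log (x - 1) + log (Gamma (x - 1)) := by
    rw [← log_mul hx₁.ne' (Gamma_pos_of_pos hx₁).ne', ← Gamma_add_one hx₁.ne', sub_add_cancel]
  simp only [Function.comp_apply, sub_sub_cancel, div_one, add_sub_cancel_left] at hslope
  rw [le_div_iff₀ ha, hlog, add_sub_cancel_right] at hslope
  have hΓx := Gamma_pos_of_pos (by linarith : 0 < x)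
  rw [← log_le_log_iff (by positivity) (Gamma_pos_of_pos (by linarith)),
    log_mul (by positivity) hΓx.ne', log_rpow hx₁]
  linarith

theorem tendsto_Gamma_div_Gamma_add_atTop {a : ℝ} (ha : 0 < a) :
    Tendsto (fun x => Gamma x / Gamma (x + a)) atTop (𝓝 0) := by
  have hbound : Tendsto (fun x : ℝ => (x - 1) ^ (-a)) atTop (𝓝 0) :=
    (tendsto_rpow_neg_atTop ha).comp (tendsto_atTop_add_const_right _ (-1) tendsto_id) |>.congr
      fun x => by simp [sub_eq_add_neg]
  refine tendsto_of_tendsto_of_tendsto_of_le_of_le' tendsto_const_nhds hbound ?_ ?_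
  · filter_upwards [eventually_gt_atTop 0] with x hx
    exact div_nonneg (Gamma_pos_of_pos hx).le (Gamma_pos_of_pos (by linarith)).le
  · filter_upwards [eventually_gt_atTop 1] with x hx
    rw [rpow_neg (by linarith), div_le_iff₀ (Gamma_pos_of_pos (by linarith)), ← div_eq_inv_mul,
      le_div_iff₀ (rpow_pos_of_pos (by linarith) _), mul_comm]
    exact rpow_mul_Gamma_le_Gamma_add hx ha

-- At `x = 0` both sides vanish because `Gamma 0 = 0`.
theorem mul_inv_Gamma_add_one (x : ℝ) : x * (Gamma (x + 1))⁻¹ = (Gamma x)⁻¹ := by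
  rcases eq_or_ne x 0 with rfl | hx
  · simp
  · rw [Gamma_add_one hx, mul_inv, ← mul_assoc, mul_inv_cancel₀ hx, one_mul]

end Real

theorem hasDerivAt_tsum_mul_pow {𝕜 : Type*} [RCLike 𝕜] {c : ℕ → 𝕜} {R : ℝ} {x : 𝕜}
    (hc : Summable fun k => k * ‖c k‖ * R ^ k) (hx : ‖x‖ < R) :
    HasDerivAt (fun y => ∑' k, c k * y ^ k) (∑' k, c k * (k * x ^ (k - 1))) x := by
  have hR : 0 < R := (norm_nonneg x).trans_lt hx
  refine hasDerivAt_tsum_of_isPreconnected (hc.mul_left R⁻¹) Metric.isOpen_ball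
    (convex_ball 0 R).isPreconnected (fun k y _ => (hasDerivAt_pow k y).const_mul (c k))
    (fun k y hy => ?_) (Metric.mem_ball_self hR)
    (hasSum_single 0 fun k hk => by simp [hk]).summable (mem_ball_zero_iff.mpr hx)
  rcases k with _ | k
  · simp
  have hy : ‖y‖ ≤ R := (mem_ball_zero_iff.mp hy).le
  calc ‖c (k + 1) * ((k + 1 : ℕ) * y ^ (k + 1 - 1))‖ = (k + 1 : ℕ) * ‖c (k + 1)‖ * ‖y‖ ^ k := by
        rw [norm_mul, norm_mul, norm_pow, RCLike.norm_natCast, Nat.add_sub_cancel]; ring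
    _ ≤ (k + 1 : ℕ) * ‖c (k + 1)‖ * R ^ k := by gcongr
    _ = R⁻¹ * ((k + 1 : ℕ) * ‖c (k + 1)‖ * R ^ (k + 1)) := by field_simp; ring

theorem summable_succ_mul_norm_inv_Gamma_mul_pow {α : ℝ} (hα : 0 < α) (σ : ℝ) {r : ℝ}
    (hr : 0 < r) : Summable fun k : ℕ => ((k : ℝ) + 1) * ‖(Gamma (α * k + σ))⁻¹‖ * r ^ k := by
  have hy : Tendsto (fun k : ℕ => α * k + σ) atTop atTop :=
    tendsto_atTop_add_const_right _ σ (tendsto_natCast_atTop_atTop.const_mul_atTop hα)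
  have hratio : Tendsto (fun k : ℕ => (1 + 1 / ((k : ℝ) + 1)) *
      ‖Gamma (α * k + σ) / Gamma (α * k + σ + α)‖ * r) atTop (𝓝 0) := by
    simpa using ((tendsto_const_nhds.add tendsto_one_div_add_atTop_nhds_zero_nat).mul
      ((tendsto_Gamma_div_Gamma_add_atTop hα).comp hy).norm).mul_const r
  refine summable_of_ratio_test_tendsto_lt_one zero_lt_one ?_ (hratio.congr' ?_)
  · filter_upwards [hy.eventually_gt_atTop 0] with k hk
    have : 0 < ‖(Gamma (α * k + σ))⁻¹‖ := by simpa using (Gamma_pos_of_pos hk).ne'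
    positivity
  · filter_upwards [hy.eventually_gt_atTop 0] with k hk
    have h₀ := Gamma_pos_of_pos hk
    have h₁ := Gamma_pos_of_pos (by linarith : 0 < α * k + σ + α)
    rw [show α * ((k + 1 : ℕ) : ℝ) + σ = α * k + σ + α by push_cast; ring]
    push_cast
    simp only [norm_mul, norm_div, norm_inv, norm_pow, Real.norm_eq_abs, abs_of_pos h₀,
      abs_of_pos h₁, abs_of_pos hr, abs_of_pos (by positivity : (0 : ℝ) < k + 1),
      abs_of_pos (by positivity : (0 : ℝ) < k + 1 + 1)]
    field_simp
    ring

theorem summable_mittagLeffler {α : ℝ} (hα : 0 < α) (σ x : ℝ) :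
    Summable fun k : ℕ => x ^ k / Gamma (α * k + σ) := by
  refine .of_norm_bounded (summable_succ_mul_norm_inv_Gamma_mul_pow hα σ (by positivity :
    0 < |x| + 1)) fun k => ?_
  rw [Real.norm_eq_abs, Real.norm_eq_abs, abs_div, abs_pow, div_eq_inv_mul, ← abs_inv]
  calc |(Gamma (α * k + σ))⁻¹| * |x| ^ k ≤ |(Gamma (α * k + σ))⁻¹| * (|x| + 1) ^ k := by
        gcongr; linarith
    _ ≤ ((k : ℝ) + 1) * (|(Gamma (α * k + σ))⁻¹| * (|x| + 1) ^ k) :=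
        le_mul_of_one_le_left (by positivity) (by simp)
    _ = ((k : ℝ) + 1) * |(Gamma (α * k + σ))⁻¹| * (|x| + 1) ^ k := (mul_assoc ..).symm

theorem hasDerivAt_mittagLeffler {α : ℝ} (hα : 0 < α) (σ x : ℝ) :
    HasDerivAt (mittagLeffler α σ) (∑' k : ℕ, k * x ^ (k - 1) / Gamma (α * k + σ)) x := by
  have hc : Summable fun k : ℕ => k * ‖(Gamma (α * k + σ))⁻¹‖ * (|x| + 1) ^ k :=
    (summable_succ_mul_norm_inv_Gamma_mul_pow hα σ (r := |x| + 1) (by positivity)).of_nonneg_of_le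
      (fun k => by positivity) fun k => by gcongr; linarith
  have h := hasDerivAt_tsum_mul_pow hc (by simp : ‖x‖ < |x| + 1)
  simp only [← div_eq_inv_mul] at h
  exact h

theorem mittagLeffler_sub_one {α : ℝ} (hα : 0 < α) (σ x : ℝ) :
    mittagLeffler α (σ - 1) x =
      (σ - 1) * mittagLeffler α σ x + α * x * deriv (mittagLeffler α σ) x := by
  have hterm (k : ℕ) : α * x * (k * x ^ (k - 1) / Gamma (α * k + σ)) =
      x ^ k / Gamma (α * k + (σ - 1)) - (σ - 1) * (x ^ k / Gamma (α * k + σ)) := by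
    have hpow : x * (k * x ^ (k - 1)) = k * x ^ k := by
      rcases k with _ | k
      · simp
      · rw [Nat.add_sub_cancel, pow_succ]; ring
    have hΓ : (Gamma (α * k + (σ - 1)))⁻¹ = (α * k + σ - 1) * (Gamma (α * k + σ))⁻¹ := by
      rw [← mul_inv_Gamma_add_one]; ring_nf
    simp only [div_eq_mul_inv, hΓ]
    linear_combination (α * (Gamma (α * k + σ))⁻¹) * hpow
  rw [(hasDerivAt_mittagLeffler hα σ x).deriv, ← tsum_mul_left, tsum_congr hterm, mittagLeffler,
    mittagLeffler, ← tsum_mul_left,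
    (summable_mittagLeffler hα _ x).tsum_sub ((summable_mittagLeffler hα σ x).mul_left _)]
  ring

theorem hasDerivAt_rpow_mul_mittagLeffler_general (α lam t : ℝ) (hα0 : 0 < α) (ht : 0 < t) :
    HasDerivAt (fun s : ℝ => s ^ (α - 1) * mittagLeffler α α (-lam * s ^ α))
      (t ^ (α - 2) * mittagLeffler α (α - 1) (-lam * t ^ α)) t := by
  have hinner : HasDerivAt (fun s => -lam * s ^ α) (-lam * (α * t ^ (α - 1))) t :=
    (hasDerivAt_rpow_const (Or.inl ht.ne')).const_mul (-lam)
  have h := (hasDerivAt_rpow_const (p := α - 1) (Or.inl ht.ne')).mul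
    ((hasDerivAt_mittagLeffler hα0 α _).differentiableAt.hasDerivAt.comp t hinner)
  have hpow : t ^ (α - 1) * t ^ (α - 1) = t ^ α * t ^ (α - 2) := by
    rw [← rpow_add ht, ← rpow_add ht]; ring_nf
  refine h.congr_deriv ?_
  rw [Function.comp_apply, mittagLeffler_sub_one hα0, show α - 1 - 1 = α - 2 by ring]
  linear_combination (-α * lam * deriv (mittagLeffler α α) (-lam * t ^ α)) * hpow

theorem hasDerivAt_rpow_mul_mittagLeffler (α lam t : ℝ) (hα0 : 0 < α) (hα1 : α < 1)
    (hlam : 0 < lam) (ht : 0 < t) :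
    HasDerivAt (fun s : ℝ => s ^ (α - 1) * mittagLeffler α α (-lam * s ^ α))
      (t ^ (α - 2) * mittagLeffler α (α - 1) (-lam * t ^ α)) t :=
  hasDerivAt_rpow_mul_mittagLeffler_general α lam t hα0 ht
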